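/- Let E be a Banach space, p ∈ (1,∞), μ ∈ (1/p,1], and let T > 0 be finite. For every u ∈ W^1_{p,μ}((0,T);E) the limit u(0) := lim_{t→0+} u(t) exists in E, and there is a constant C = C(p,μ,T) such that ‖u(0)‖_E ≤ C (‖u‖_{L_{p,μ}((0,T);E)} + ‖u'‖_{L_{p,μ}((0,T);E)}). Thus the temporal trace u ↦ u(0) is a bounded linear map from W^1_{p,μ}((0,T);E) to E. -/

import Mathlib

/-!
The weight `t ^ (μ - 1)` lies in `L_{p'}(0,T)` exactly when `μ > 1/p`, so by Hölder's inequality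
`u' ∈ L_{p,μ}` is integrable on `(0,T)`. The fundamental theorem of calculus then writes
`u t = x + ∫₀ᵗ u'`, which gives the limit `x` at `0⁺` and `‖x‖ - ‖u'‖_{L₁} ≤ ‖u t‖` for every
`t`; integrating this lower bound against the weight over `(T/2, T)` bounds it by `‖u‖_{L_{p,μ}}`.
-/

open MeasureTheory Set Filter Topology
open scoped ENNReal NNReal

noncomputable section

/-- The interval `(0,T)` for `T ∈ (0,∞]`. -/
def Iset (T : ℝ≥0∞) : Set ℝ := {t : ℝ | 0 < t ∧ ENNReal.ofReal t < T}

/-- The `p`-th power of the `L_{p,μ}(I;E)` norm of `f`. -/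
def wInt (p μ : ℝ) (I : Set ℝ) {E : Type*} [NormedAddCommGroup E] (f : ℝ → E) : ℝ≥0∞ :=
  ∫⁻ t in I, ENNReal.ofReal (t ^ (p * (1 - μ)) * ‖f t‖ ^ p)

/-- The norm of `L_{p,μ}(I;E)`. -/
def wNorm (p μ : ℝ) (I : Set ℝ) {E : Type*} [NormedAddCommGroup E] (f : ℝ → E) : ℝ≥0∞ :=
  (wInt p μ I f) ^ (1 / p)

/-- Membership in `L_{p,μ}(I;E)`. -/
def MemWLp (p μ : ℝ) (I : Set ℝ) {E : Type*} [NormedAddCommGroup E] (f : ℝ → E) : Prop :=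
  AEStronglyMeasurable f (MeasureTheory.volume.restrict I) ∧ wInt p μ I f < ⊤

/-- `u` is locally absolutely continuous on the interval `I` with a.e. derivative `u'`,
expressed via the fundamental theorem of calculus. -/
def LocAC (I : Set ℝ) {E : Type*} [NormedAddCommGroup E] [NormedSpace ℝ E] (u u' : ℝ → E) : Prop :=
  ∀ a b : ℝ, a ∈ I → b ∈ I → a ≤ b →
    IntegrableOn u' (Ioo a b) ∧ u b - u a = ∫ t in Ioo a b, u' t

/-- Membership in the weighted Sobolev space `W^1_{p,μ}(I;E)`. -/
def MemW1 (p μ : ℝ) (I : Set ℝ) {E : Type*} [NormedAddCommGroup E] [NormedSpace ℝ E]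
    (u u' : ℝ → E) : Prop :=
  MemWLp p μ I u ∧ MemWLp p μ I u' ∧ LocAC I u u'

theorem lintegral_ofReal_rpow_Ioo_lt_top {r T : ℝ} (hr : -1 < r) (hT : 0 < T) :
    ∫⁻ t in Ioo 0 T, ENNReal.ofReal (t ^ r) < ⊤ :=
  ((intervalIntegral.integrableOn_Ioo_rpow_iff hT).mpr hr).lintegral_lt_top

theorem Real.HolderConjugate.neg_one_lt_sub_one_mul {p q μ : ℝ} (hpq : p.HolderConjugate q)
    (hμ : 1 / p < μ) : -1 < (μ - 1) * q := by
  have hq : 0 < q := hpq.symm.pos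
  have h := hpq.inv_add_inv_eq_one
  rw [one_div] at hμ
  have : -1 / q < μ - 1 := by rw [neg_div, ← inv_eq_one_div]; linarith
  rwa [div_lt_iff₀ hq] at this

section Weighted

variable {E : Type*} [NormedAddCommGroup E] {p q μ : ℝ} {I : Set ℝ}

theorem lintegral_enorm_le_wNorm_mul (hpq : p.HolderConjugate q) (hI : MeasurableSet I)
    (hI0 : I ⊆ Ioi 0) {v : ℝ → E} (hv : AEStronglyMeasurable v (volume.restrict I)) :
    ∫⁻ t in I, ‖v t‖ₑ ≤
      wNorm p μ I v * (∫⁻ t in I, ENNReal.ofReal (t ^ ((μ - 1) * q))) ^ (1 / q) := by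
  set f : ℝ → ℝ≥0∞ := fun t => ENNReal.ofReal (t ^ (1 - μ) * ‖v t‖)
  set g : ℝ → ℝ≥0∞ := fun t => ENNReal.ofReal (t ^ (μ - 1))
  have hf : AEMeasurable f (volume.restrict I) :=
    ((measurable_id.pow_const _).aemeasurable.mul hv.norm.aemeasurable).ennreal_ofReal
  have hg : AEMeasurable g (volume.restrict I) :=
    (measurable_id.pow_const _).ennreal_ofReal.aemeasurable
  have hfg : ∫⁻ t in I, ‖v t‖ₑ = ∫⁻ t in I, (f * g) t := by
    refine setLIntegral_congr_fun hI fun t ht => ?_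
    have ht0 : 0 < t := hI0 ht
    rw [Pi.mul_apply, ← ENNReal.ofReal_mul (by positivity), mul_right_comm, ← Real.rpow_add ht0,
      show 1 - μ + (μ - 1) = 0 by ring, Real.rpow_zero, one_mul, ofReal_norm]
  have hfp : wInt p μ I v = ∫⁻ t in I, f t ^ p := by
    refine setLIntegral_congr_fun hI fun t ht => ?_
    have ht0 : 0 ≤ t := (hI0 ht).le
    rw [ENNReal.ofReal_rpow_of_nonneg (by positivity) hpq.nonneg,
      Real.mul_rpow (by positivity) (norm_nonneg _), ← Real.rpow_mul ht0, mul_comm (1 - μ)]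
  have hgq : ∫⁻ t in I, ENNReal.ofReal (t ^ ((μ - 1) * q)) = ∫⁻ t in I, g t ^ q := by
    refine setLIntegral_congr_fun hI fun t ht => ?_
    rw [ENNReal.ofReal_rpow_of_nonneg (Real.rpow_nonneg (hI0 ht).le _) hpq.symm.nonneg,
      ← Real.rpow_mul (hI0 ht).le]
  rw [hfg, wNorm, hfp, hgq]
  exact ENNReal.lintegral_mul_le_Lp_mul_Lq _ hpq hf hg

theorem MemWLp.wNorm_ne_top {v : ℝ → E} (hp : 0 < p) (hv : MemWLp p μ I v) :
    wNorm p μ I v ≠ ⊤ :=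
  (ENNReal.rpow_lt_top_of_nonneg (by positivity) hv.2.ne).ne

theorem MemWLp.integrableOn (hpq : p.HolderConjugate q) (hI : MeasurableSet I)
    (hI0 : I ⊆ Ioi 0) (hK : ∫⁻ t in I, ENNReal.ofReal (t ^ ((μ - 1) * q)) < ⊤) {v : ℝ → E}
    (hv : MemWLp p μ I v) : IntegrableOn v I :=
  ⟨hv.1, (lintegral_enorm_le_wNorm_mul hpq hI hI0 hv.1).trans_lt <| ENNReal.mul_lt_top
    (hv.wNorm_ne_top hpq.pos).lt_top
    (ENNReal.rpow_lt_top_of_nonneg (by simp [hpq.symm.nonneg]) hK.ne)⟩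

theorem MemWLp.integral_norm_le (hpq : p.HolderConjugate q) (hI : MeasurableSet I)
    (hI0 : I ⊆ Ioi 0) (hK : ∫⁻ t in I, ENNReal.ofReal (t ^ ((μ - 1) * q)) < ⊤) {v : ℝ → E}
    (hv : MemWLp p μ I v) :
    ∫ t in I, ‖v t‖ ≤ (wNorm p μ I v).toReal *
      ((∫⁻ t in I, ENNReal.ofReal (t ^ ((μ - 1) * q))) ^ (1 / q)).toReal := by
  rw [integral_norm_eq_lintegral_enorm hv.1, ← ENNReal.toReal_mul]
  exact ENNReal.toReal_mono (ENNReal.mul_ne_top (hv.wNorm_ne_top hpq.pos)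
    (ENNReal.rpow_lt_top_of_nonneg (by simp [hpq.symm.nonneg]) hK.ne).ne)
    (lintegral_enorm_le_wNorm_mul hpq hI hI0 hv.1)

theorem ofReal_le_wInt_of_le_norm {f : ℝ → E} {a b c : ℝ} (hp : 0 ≤ p) (hμ1 : μ ≤ 1)
    (ha : 0 ≤ a) (hc : 0 ≤ c) (hI : Ioo a b ⊆ I) (h : ∀ t ∈ Ioo a b, c ≤ ‖f t‖) :
    ENNReal.ofReal (a ^ (p * (1 - μ)) * c ^ p * (b - a)) ≤ wInt p μ I f := calc
  _ = ∫⁻ _ in Ioo a b, ENNReal.ofReal (a ^ (p * (1 - μ)) * c ^ p) := by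
    rw [setLIntegral_const, Real.volume_Ioo, ← ENNReal.ofReal_mul (by positivity)]
  _ ≤ ∫⁻ t in Ioo a b, ENNReal.ofReal (t ^ (p * (1 - μ)) * ‖f t‖ ^ p) := by
    refine setLIntegral_mono' measurableSet_Ioo fun t ht => ENNReal.ofReal_le_ofReal ?_
    have hpμ : 0 ≤ p * (1 - μ) := mul_nonneg hp (by linarith)
    have hct := h t ht
    have hat := ht.1.le
    gcongr
    exact Real.rpow_nonneg (ha.trans hat) _
  _ ≤ wInt p μ I f := lintegral_mono_set hI

theorem le_rpow_mul_toReal_wNorm {f : ℝ → E} {a b c : ℝ} (hp : 0 < p) (hμ1 : μ ≤ 1)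
    (ha : 0 < a) (hab : a < b) (hI : Ioo a b ⊆ I) (hfin : wInt p μ I f ≠ ⊤)
    (h : ∀ t ∈ Ioo a b, c ≤ ‖f t‖) :
    c ≤ (a ^ (p * (1 - μ)) * (b - a)) ^ (-(1 / p)) * (wNorm p μ I f).toReal := by
  have hM : (wNorm p μ I f).toReal ^ p = (wInt p μ I f).toReal := by
    rw [wNorm, ← ENNReal.toReal_rpow, one_div, Real.rpow_inv_rpow ENNReal.toReal_nonneg hp.ne']
  set X := a ^ (p * (1 - μ)) * (b - a)
  set M := (wNorm p μ I f).toReal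
  have hX : 0 < X := mul_pos (by positivity) (by linarith)
  rcases lt_or_ge c 0 with hc | hc
  · exact hc.le.trans (by positivity)
  have hlow : X * c ^ p ≤ M ^ p := by
    rw [hM, ← ENNReal.toReal_ofReal (by positivity : 0 ≤ X * c ^ p)]
    refine ENNReal.toReal_mono hfin (le_of_eq_of_le ?_
      (ofReal_le_wInt_of_le_norm hp.le hμ1 ha.le hc hI h))
    exact congrArg ENNReal.ofReal (by simp only [X]; ring)
  have hpow : (X ^ (-(1 / p)) * M) ^ p = M ^ p / X := by
    rw [Real.mul_rpow (by positivity) ENNReal.toReal_nonneg, ← Real.rpow_mul hX.le,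
      show -(1 / p) * p = -1 by field_simp, Real.rpow_neg_one, inv_mul_eq_div]
  rw [← Real.rpow_le_rpow_iff hc (by positivity) hp, hpow, le_div_iff₀ hX, mul_comm]
  exact hlow

end Weighted

namespace LocAC

variable {E : Type*} [NormedAddCommGroup E] [NormedSpace ℝ E] {u u' : ℝ → E} {a b : ℝ}

theorem sub_eq_intervalIntegral (h : LocAC (Ioo a b) u u') {s t : ℝ} (hs : s ∈ Ioo a b)
    (ht : t ∈ Ioo a b) : u t - u s = ∫ r in s..t, u' r := by
  rcases le_total s t with hst | hts
  · rw [intervalIntegral.integral_of_le hst, integral_Ioc_eq_integral_Ioo, (h s t hs ht hst).2]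
  · rw [intervalIntegral.integral_symm, intervalIntegral.integral_of_le hts,
      integral_Ioc_eq_integral_Ioo, ← (h t s ht hs hts).2, neg_sub]

theorem exists_eq_add_intervalIntegral (h : LocAC (Ioo a b) u u') (hab : a < b)
    (hu' : IntegrableOn u' (Ioo a b)) :
    ∃ x : E, ∀ t ∈ Ioo a b, u t = x + ∫ r in a..t, u' r := by
  have hii : ∀ t ∈ Ioo a b, IntervalIntegrable u' volume a t := fun t ht =>
    (intervalIntegrable_iff_integrableOn_Ioo_of_le ht.1.le).mpr
      (hu'.mono_set (Ioo_subset_Ioo_right ht.2.le))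
  have hc : (a + b) / 2 ∈ Ioo a b := ⟨by linarith, by linarith⟩
  refine ⟨u ((a + b) / 2) - ∫ r in a..(a + b) / 2, u' r, fun t ht => ?_⟩
  have := h.sub_eq_intervalIntegral hc ht
  rw [← intervalIntegral.integral_interval_sub_left (hii t ht) (hii _ hc)] at this
  rw [sub_eq_iff_eq_add'.mp this]
  abel

theorem exists_tendsto_nhdsGT (h : LocAC (Ioo a b) u u') (hab : a < b)
    (hu' : IntegrableOn u' (Ioo a b)) :
    ∃ x : E, Tendsto u (𝓝[>] a) (𝓝 x) ∧
      ∀ t ∈ Ioo a b, ‖x‖ ≤ ‖u t‖ + ∫ r in Ioo a b, ‖u' r‖ := by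
  obtain ⟨x, hx⟩ := h.exists_eq_add_intervalIntegral hab hu'
  refine ⟨x, ?_, fun t ht => ?_⟩
  · have hprim : Tendsto (fun t => ∫ r in a..t, u' r) (𝓝[>] a) (𝓝 0) := by
      have hii : IntervalIntegrable u' volume (min a a) (max a b) := by
        simpa [hab.le] using (intervalIntegrable_iff_integrableOn_Ioo_of_le hab.le).mpr hu'
      have hcont := intervalIntegral.continuousWithinAt_primitive (Real.volume_singleton (a := a)) hii
      simpa using hcont.tendsto.mono_left (nhdsWithin_le_of_mem (Icc_mem_nhdsGT hab))
    have hsum : Tendsto (fun t => x + ∫ r in a..t, u' r) (𝓝[>] a) (𝓝 x) := by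
      simpa using tendsto_const_nhds.add hprim
    refine hsum.congr' ?_
    filter_upwards [Ioo_mem_nhdsGT hab] with t ht using (hx t ht).symm
  · calc ‖x‖ = ‖u t - ∫ r in a..t, u' r‖ := by rw [hx t ht, add_sub_cancel_right]
      _ ≤ ‖u t‖ + ∫ r in Ioc a t, ‖u' r‖ := by
        grw [norm_sub_le, intervalIntegral.norm_integral_le_integral_norm ht.1.le,
          intervalIntegral.integral_of_le ht.1.le]
      _ ≤ ‖u t‖ + ∫ r in Ioo a b, ‖u' r‖ := by
        refine add_le_add_right (setIntegral_mono_set hu'.norm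
          (.of_forall fun _ => norm_nonneg _) (.of_forall fun r hr => ?_)) _
        exact ⟨hr.1, hr.2.trans_lt ht.2⟩

end LocAC

theorem stmt_16_general {E : Type*} [NormedAddCommGroup E] [NormedSpace ℝ E]
    (p μ : ℝ) (hp : 1 < p) (hμ : 1 / p < μ) (hμ1 : μ ≤ 1)
    (T : ℝ) (hT : 0 < T) :
    ∃ C : ℝ, 0 < C ∧ ∀ u u' : ℝ → E, MemW1 p μ (Ioo 0 T) u u' →
      ∃ x : E,
        Tendsto u (nhdsWithin 0 (Ioi 0)) (nhds x) ∧
        ‖x‖ ≤ C * ((wNorm p μ (Ioo 0 T) u).toReal + (wNorm p μ (Ioo 0 T) u').toReal) := by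
  have hpq := Real.HolderConjugate.conjExponent hp
  have hK := lintegral_ofReal_rpow_Ioo_lt_top (hpq.neg_one_lt_sub_one_mul hμ) hT
  have hI0 : Ioo 0 T ⊆ Ioi 0 := Ioo_subset_Ioi_self
  set K := ((∫⁻ t in Ioo 0 T, ENNReal.ofReal (t ^ ((μ - 1) * p.conjExponent))) ^
    (1 / p.conjExponent)).toReal
  set c := ((T / 2) ^ (p * (1 - μ)) * (T - T / 2)) ^ (-(1 / p))
  have hc : 0 < c := Real.rpow_pos_of_pos (mul_pos (by positivity) (by linarith)) _
  refine ⟨c + K, add_pos_of_pos_of_nonneg hc ENNReal.toReal_nonneg, ?_⟩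
  rintro u u' ⟨hu, hu', hAC⟩
  obtain ⟨x, hx, hxle⟩ :=
    hAC.exists_tendsto_nhdsGT hT (hu'.integrableOn hpq measurableSet_Ioo hI0 hK)
  refine ⟨x, hx, ?_⟩
  have hL := hu'.integral_norm_le hpq measurableSet_Ioo hI0 hK
  have hxu : ‖x‖ - ∫ t in Ioo 0 T, ‖u' t‖ ≤ c * (wNorm p μ (Ioo 0 T) u).toReal :=
    le_rpow_mul_toReal_wNorm hpq.pos hμ1 (half_pos hT) (half_lt_self hT)
      (Ioo_subset_Ioo_left (half_pos hT).le) hu.2.ne fun t ht => by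
        linarith [hxle t ⟨(half_pos hT).trans ht.1, ht.2⟩]
  have hMu : 0 ≤ (wNorm p μ (Ioo 0 T) u).toReal := ENNReal.toReal_nonneg
  have hMu' : 0 ≤ (wNorm p μ (Ioo 0 T) u').toReal := ENNReal.toReal_nonneg
  have hK0 : 0 ≤ K := ENNReal.toReal_nonneg
  nlinarith [mul_nonneg hc.le hMu', mul_nonneg hK0 hMu]

/-- The temporal trace at `t = 0` on `W^1_{p,μ}((0,T);E)` for finite `T`:
the limit `u(0) = lim_{t→0⁺} u(t)` exists and `‖u(0)‖ ≤ C (‖u‖_{L_{p,μ}} + ‖u'‖_{L_{p,μ}})`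
with `C = C(p,μ,T)`. -/
theorem stmt_16 {E : Type*} [NormedAddCommGroup E] [NormedSpace ℝ E] [CompleteSpace E]
    (p μ : ℝ) (hp : 1 < p) (hμ : 1 / p < μ) (hμ1 : μ ≤ 1)
    (T : ℝ) (hT : 0 < T) :
    ∃ C : ℝ, 0 < C ∧ ∀ u u' : ℝ → E, MemW1 p μ (Ioo 0 T) u u' →
      ∃ x : E,
        Tendsto u (nhdsWithin 0 (Ioi 0)) (nhds x) ∧
        ‖x‖ ≤ C * ((wNorm p μ (Ioo 0 T) u).toReal + (wNorm p μ (Ioo 0 T) u').toReal) :=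
  stmt_16_general p μ hp hμ hμ1 T hT
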